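/- arXiv:1410.7469 — 2 statements merged into one kernel-verified Lean document; each statement's English description precedes it below -/
import Mathlib

section
/- In a finite Markov chain, for a state s and sets Sat1, Sat2 ⊆ S: Pr_s(∃ h. X_h ∈ Sat2 ∧ ∀ i < h. X_i ∈ Sat1) = 0 if and only if there is no finite path s = s_0, s_1, …, s_n with positive transition probabilities at each step such that s_n ∈ Sat2 and s_i ∈ Sat1 for all i < n. -/
open MeasureTheory
open scoped ENNReal Classical

/-!
A path of positive-probability transitions `s = w 0, …, w n` that satisfies the until
formula at step `n` spans a cylinder of positive measure lying inside the until event.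
Conversely the until event is the countable union, over the step `h` at which `Sat2` is
reached and over the first `h + 1` states, of cylinders; when no such path exists every
one of them has probability zero.
-/

namespace PathSpace

variable {S : Type*}

def cylinder (n : ℕ) (w : ℕ → S) : Set (ℕ → S) := {σ | ∀ i ≤ n, σ i = w i}

theorem cylinder_eq_setOf_fin (n : ℕ) (w : ℕ → S) :
    cylinder n w = {σ | ∀ i : Fin (n + 1), σ i = w i} := by
  ext σ
  simp only [cylinder, Set.mem_ofPred_eq, Fin.forall_iff, Nat.lt_succ_iff]

theorem countable_range_cylinder [Countable S] (n : ℕ) :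
    (Set.range (cylinder (S := S) n)).Countable := by
  refine (Set.countable_range fun v : Fin (n + 1) → S =>
    {σ : ℕ → S | ∀ i : Fin (n + 1), σ i = v i}).mono ?_
  rintro _ ⟨w, rfl⟩
  exact ⟨fun i => w i, (cylinder_eq_setOf_fin n w).symm⟩

theorem measure_eq_zero_of_cylinder [Countable S] [MeasurableSpace S]
    {μ : Measure (ℕ → S)} (n : ℕ) {A : Set (ℕ → S)}
    (hA : ∀ σ ∈ A, μ (cylinder n σ) = 0) : μ A = 0 := by
  have hcover : A ⊆ ⋃₀ (cylinder n '' A) :=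
    fun σ hσ => ⟨cylinder n σ, ⟨σ, hσ, rfl⟩, fun i _ => rfl⟩
  refine measure_mono_null hcover ((measure_sUnion_null_iff
    ((countable_range_cylinder n).mono (Set.image_subset_range _ _))).mpr ?_)
  rintro _ ⟨σ, hσ, rfl⟩
  exact hA σ hσ

def untilAt (Sat1 Sat2 : Set S) (h : ℕ) : Set (ℕ → S) :=
  {σ | σ h ∈ Sat2 ∧ ∀ i < h, σ i ∈ Sat1}

theorem cylinder_subset_untilAt {Sat1 Sat2 : Set S} {h : ℕ} {w : ℕ → S}
    (hw : w ∈ untilAt Sat1 Sat2 h) : cylinder h w ⊆ untilAt Sat1 Sat2 h := by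
  intro σ hσ
  exact ⟨(hσ h le_rfl).symm ▸ hw.1, fun i hi => (hσ i hi.le).symm ▸ hw.2 i hi⟩

theorem path_prob_ne_zero_iff (P : S → S → ℝ≥0∞) (s : S) (n : ℕ) (w : ℕ → S) :
    (if w 0 = s then 1 else 0) * ∏ i ∈ Finset.range n, P (w i) (w (i + 1)) ≠ 0 ↔
      w 0 = s ∧ ∀ i < n, P (w i) (w (i + 1)) ≠ 0 := by
  simp only [ne_eq, mul_eq_zero, ite_eq_right_iff, one_ne_zero, imp_false, not_or, not_not,
    Finset.prod_eq_zero_iff, Finset.mem_range, not_exists, not_and]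

end PathSpace

open PathSpace in
theorem stmt9_general {S : Type*} [Fintype S] [MeasurableSpace S]
    (P : S → S → ℝ≥0∞)
    (μ : S → Measure (ℕ → S))
    (hcyl : ∀ (s : S) (n : ℕ) (w : ℕ → S),
      μ s {σ | ∀ i ≤ n, σ i = w i} =
        (if w 0 = s then 1 else 0) * ∏ i ∈ Finset.range n, P (w i) (w (i + 1)))
    (Sat1 Sat2 : Set S) (s : S) :
    μ s {σ | ∃ h, σ h ∈ Sat2 ∧ ∀ i < h, σ i ∈ Sat1} = 0 ↔
      ¬ ∃ (n : ℕ) (w : ℕ → S), w 0 = s ∧ (∀ i < n, P (w i) (w (i + 1)) ≠ 0) ∧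
          w n ∈ Sat2 ∧ ∀ i < n, w i ∈ Sat1 := by
  have hcyl_ne_zero : ∀ (n : ℕ) (w : ℕ → S), μ s (cylinder n w) ≠ 0 ↔
      w 0 = s ∧ ∀ i < n, P (w i) (w (i + 1)) ≠ 0 := fun n w => by
    rw [← path_prob_ne_zero_iff P s n w, ← hcyl]; rfl
  have hunion : {σ : ℕ → S | ∃ h, σ h ∈ Sat2 ∧ ∀ i < h, σ i ∈ Sat1} =
      ⋃ h, untilAt Sat1 Sat2 h := Set.ofPred_exists _
  rw [hunion]
  constructor
  · rintro hzero ⟨n, w, hw0, hpos, hw⟩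
    refine (hcyl_ne_zero n w).mpr ⟨hw0, hpos⟩ (measure_mono_null ?_ hzero)
    exact (cylinder_subset_untilAt hw).trans (Set.subset_iUnion (untilAt Sat1 Sat2) n)
  · refine fun hno => measure_iUnion_null fun h => measure_eq_zero_of_cylinder h fun w hw => ?_
    by_contra hne
    obtain ⟨hw0, hpos⟩ := (hcyl_ne_zero h w).mp hne
    exact hno ⟨h, w, hw0, hpos, hw⟩

/-- Qualitative characterisation of probability-zero unbounded until in a finite Markov
chain: `Pr_s(∃ h, X_h ∈ Sat2 ∧ ∀ i < h, X_i ∈ Sat1) = 0` iff there is no finite path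
`s = s_0, s_1, …, s_n` of positive-probability transitions with `s_n ∈ Sat2` and
`s_i ∈ Sat1` for all `i < n`. -/
theorem stmt9 {S : Type*} [Fintype S] [MeasurableSpace S] [MeasurableSingletonClass S]
    (P : S → S → ℝ≥0∞) (hrow : ∀ s, ∑' s', P s s' = 1)
    (μ : S → Measure (ℕ → S))
    (hprob : ∀ s, IsProbabilityMeasure (μ s))
    (hcyl : ∀ (s : S) (n : ℕ) (w : ℕ → S),
      μ s {σ | ∀ i ≤ n, σ i = w i} =
        (if w 0 = s then 1 else 0) * ∏ i ∈ Finset.range n, P (w i) (w (i + 1)))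
    (Sat1 Sat2 : Set S) (s : S) :
    μ s {σ | ∃ h, σ h ∈ Sat2 ∧ ∀ i < h, σ i ∈ Sat1} = 0 ↔
      ¬ ∃ (n : ℕ) (w : ℕ → S), w 0 = s ∧ (∀ i < n, P (w i) (w (i + 1)) ≠ 0) ∧
          w n ∈ Sat2 ∧ ∀ i < n, w i ∈ Sat1 :=
  stmt9_general P μ hcyl Sat1 Sat2 s
end

section
/- Let P be a finite stochastic matrix in absorbing block form [[I,0],[R,Q]] with Q^n → 0. Then for every transient state s and absorbing state y, the (s,y) entry of (I−Q)^{-1}R equals lim_{i→∞} (P^i)_{s,y}, and this limit equals the probability, starting in s, that the chain is eventually absorbed in y. -/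
/-!
Since `Q ^ n → 0`, some power of `Q` has operator norm `< 1`, so the geometric series `∑ Q ^ n`
converges absolutely and its sum is `(1 - Q)⁻¹`. The `(s, y)` entry of `P ^ i` is the partial sum
`∑_{k < i} (Q ^ k * R) s y`, so both claims follow from
`HasSum (fun k => Q ^ k * R) ((1 - Q)⁻¹ * R)`.
-/

open Filter

theorem summable_pow_of_tendsto_pow_nhds_zero {R : Type*} [NormedRing R] [CompleteSpace R]
    {x : R} (hx : Tendsto (fun n : ℕ => x ^ n) atTop (nhds 0)) :
    Summable fun n : ℕ => x ^ n := by
  obtain ⟨N, hN, hN0⟩ : ∃ N : ℕ, ‖x ^ N‖ < 1 ∧ N ≠ 0 :=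
    ((tendsto_norm_zero.comp hx).eventually (gt_mem_nhds one_pos)
      |>.and (eventually_ne_atTop 0)).exists
  have : NeZero N := ⟨hN0⟩
  -- `x ^ (q * N + r) = (x ^ N) ^ q * x ^ r`: an absolutely summable geometric series
  -- times a finite family
  have hprod : Summable fun p : ℕ × Fin N => (x ^ N) ^ p.1 * x ^ (p.2 : ℕ) :=
    summable_mul_of_summable_norm (f := fun q : ℕ => (x ^ N) ^ q)
      (g := fun r : Fin N => x ^ (r : ℕ)) (summable_norm_geometric_of_norm_lt_one hN) .of_finite
  rw [← (Nat.divModEquiv N).symm.summable_iff]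
  refine hprod.congr fun p => ?_
  simp only [Function.comp_apply, Nat.divModEquiv_symm_apply]
  rw [pow_add, mul_comm, pow_mul]

theorem Matrix.summable_pow_of_tendsto_pow_nhds_zero {n α : Type*} [Fintype n] [DecidableEq n]
    [NormedRing α] [CompleteSpace α] {Q : Matrix n n α}
    (hQ : Tendsto (fun k : ℕ => Q ^ k) atTop (nhds 0)) : Summable fun k : ℕ => Q ^ k :=
  @_root_.summable_pow_of_tendsto_pow_nhds_zero _ Matrix.linftyOpNormedRing
    (inferInstanceAs (CompleteSpace (Matrix n n α))) _ hQ

theorem HasSum.matrix_mul_right {ι l m n α : Type*} [Fintype m] [NonUnitalNonAssocSemiring α]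
    [TopologicalSpace α] [IsTopologicalSemiring α] {f : ι → Matrix l m α} {a : Matrix l m α}
    (hf : HasSum f a) (B : Matrix m n α) : HasSum (fun i => f i * B) (a * B) :=
  hf.map (Matrix.addMonoidHomMulRight B) (continuous_id.matrix_mul continuous_const)

theorem Matrix.hasSum_pow_mul_of_tendsto_pow_nhds_zero {m n α : Type*} [Fintype n]
    [DecidableEq n] [NormedField α] [CompleteSpace α] {Q : Matrix n n α}
    (hQ : Tendsto (fun k : ℕ => Q ^ k) atTop (nhds 0)) (R : Matrix n m α) :
    HasSum (fun k : ℕ => Q ^ k * R) ((1 - Q)⁻¹ * R) := by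
  have hS := Matrix.summable_pow_of_tendsto_pow_nhds_zero hQ
  rw [Matrix.inv_eq_left_inv hS.tsum_pow_mul_one_sub]
  exact hS.hasSum.matrix_mul_right R

theorem Matrix.fromBlocks_one_zero_pow {m n α : Type*} [Fintype m] [Fintype n] [DecidableEq m]
    [DecidableEq n] [Semiring α] (R : Matrix n m α) (Q : Matrix n n α) (i : ℕ) :
    fromBlocks (1 : Matrix m m α) 0 R Q ^ i =
      fromBlocks 1 0 ((∑ k ∈ Finset.range i, Q ^ k) * R) (Q ^ i) := by
  induction i with
  | zero => simp [fromBlocks_one]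
  | succ i ih =>
    rw [pow_succ, ih, fromBlocks_multiply]
    simp [Finset.sum_range_succ, Matrix.add_mul, pow_succ]

theorem stmt17_general {A T : Type*} [Fintype A] [Fintype T] [DecidableEq A] [DecidableEq T]
    (R : Matrix T A ℝ) (Q : Matrix T T ℝ)
    (hQlim : Tendsto (fun n : ℕ => Q ^ n) atTop (nhds 0)) :
    ∀ (s : T) (y : A),
      Tendsto (fun i : ℕ =>
          ((Matrix.fromBlocks (1 : Matrix A A ℝ) 0 R Q) ^ i) (Sum.inr s) (Sum.inl y))
        atTop (nhds (((1 - Q)⁻¹ * R) s y)) ∧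
      ((1 - Q)⁻¹ * R) s y = ∑' i : ℕ, (Q ^ i * R) s y := by
  intro s y
  have hsum : HasSum (fun k : ℕ => (Q ^ k * R) s y) (((1 - Q)⁻¹ * R) s y) :=
    Pi.hasSum.mp (Pi.hasSum.mp (Matrix.hasSum_pow_mul_of_tendsto_pow_nhds_zero hQlim R) s) y
  refine ⟨?_, hsum.tsum_eq.symm⟩
  simpa [Matrix.fromBlocks_one_zero_pow, Matrix.sum_mul, Matrix.sum_apply] using
    hsum.tendsto_sum_nat

/-- For a finite stochastic matrix in absorbing block form `P = [[I,0],[R,Q]]` with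
`Q ^ n → 0`: for every transient state `s` and absorbing state `y`, the `(s,y)` entry of
`(I - Q)⁻¹ * R` is the limit of `(P ^ i) (s, y)` as `i → ∞`, and this limit equals the
probability of eventual absorption in `y` starting from `s`, i.e. `∑' i, (Q^i * R) s y`
(the sum over the first passage time). -/
theorem stmt17 {A T : Type*} [Fintype A] [Fintype T] [DecidableEq A] [DecidableEq T]
    (R : Matrix T A ℝ) (Q : Matrix T T ℝ)
    (hRnonneg : ∀ t a, 0 ≤ R t a) (hQnonneg : ∀ t t', 0 ≤ Q t t')
    (hrow : ∀ t, ∑ a, R t a + ∑ t', Q t t' = 1)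
    (hQlim : Tendsto (fun n : ℕ => Q ^ n) atTop (nhds 0)) :
    ∀ (s : T) (y : A),
      Tendsto (fun i : ℕ =>
          ((Matrix.fromBlocks (1 : Matrix A A ℝ) 0 R Q) ^ i) (Sum.inr s) (Sum.inl y))
        atTop (nhds (((1 - Q)⁻¹ * R) s y)) ∧
      ((1 - Q)⁻¹ * R) s y = ∑' i : ℕ, (Q ^ i * R) s y :=
  stmt17_general R Q hQlim
end
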